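/- Work in K = ℚ(q, s₁, …, s_N). For every θ = (θ₁, …, θ_N) ∈ ℤ_{≥0}^N the following identity of rational functions holds: Σ_{i=1}^N ((1 − q^{−θ_i}) s_i + (1 − q^{θ_i}) s_i^{−1}) = − Σ_{k=1}^N q^{−θ_k} s_k · [∏_{i=1}^N (1 − q^{θ_k} s_i/s_k)(1 − q^{θ_k}/(s_i s_k))] / [∏_{1≤i≤N, i≠k} (1 − q^{θ_k−θ_i} s_i/s_k)(1 − q^{θ_k+θ_i}/(s_i s_k))]. -/

import Mathlib

open scoped BigOperators

noncomputable section

attribute [local instance] Classical.propDecidable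

namespace QToda

/-- The base field `ℚ(q, s₁, …, s_N)`: the fraction field of the polynomial ring in `N + 1`
variables over `ℚ`, where variable `0` is `q` and variable `i` is `sᵢ` for `1 ≤ i ≤ N`. -/
abbrev K (N : ℕ) : Type := FractionRing (MvPolynomial (Fin (N + 1)) ℚ)

/-- The indeterminate `q` of `ℚ(q, s₁, …, s_N)`. -/
def qP (N : ℕ) : K N :=
  algebraMap (MvPolynomial (Fin (N + 1)) ℚ) (K N) (MvPolynomial.X ⟨0, Nat.succ_pos N⟩)

/-- The indeterminate `sᵢ` of `ℚ(q, s₁, …, s_N)` (1-based; meaningful for `1 ≤ i ≤ N`). -/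
def sP (N : ℕ) (i : ℕ) : K N :=
  if h : i ≤ N then
    algebraMap (MvPolynomial (Fin (N + 1)) ℚ) (K N) (MvPolynomial.X ⟨i, Nat.lt_succ_of_le h⟩)
  else 1

variable {F : Type*} [Field F]

/-- The q-Pochhammer symbol `(a;q)_n = ∏_{k=1}^n (1 - q^(k-1) a)`. -/
def qPoch (q a : F) (n : ℕ) : F := ∏ k ∈ Finset.range n, (1 - q ^ k * a)

/-- The pairs `(i, j)` with `a ≤ i < j ≤ b`. -/
def pairsLT (a b : ℕ) : Finset (ℕ × ℕ) :=
  (Finset.Icc a b ×ˢ Finset.Icc a b).filter fun p => p.1 < p.2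

/-- `θ` is (the extension by zero of) a strictly upper triangular `N × N` matrix of
nonnegative integers, 1-based indexing. -/
def UT (N : ℕ) (θ : ℕ → ℕ → ℕ) : Prop :=
  ∀ i j, ¬(1 ≤ i ∧ i < j ∧ j ≤ N) → θ i j = 0

/-- `θ` is (the extension by zero of) a vector `(θ₁, …, θ_N) ∈ ℤ_{≥0}^N`, 1-based indexing. -/
def Vec (N : ℕ) (θ : ℕ → ℕ) : Prop := ∀ i, ¬(1 ≤ i ∧ i ≤ N) → θ i = 0

/-- The coefficients `c^{Toda}_N(θ; s; q)` of the `A_{N-1}` q-Toda function. -/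
def cToda (q : F) (s : ℕ → F) (N : ℕ) (θ : ℕ → ℕ → ℕ) : F :=
  ∏ k ∈ Finset.Icc 2 N,
    ∏ p ∈ (Finset.Icc 1 (k - 1) ×ˢ Finset.Icc 1 (k - 1)).filter (fun p => p.1 ≤ p.2),
      (1 / qPoch q
          (q ^ (∑ a ∈ Finset.Icc (k + 1) N, ((θ p.1 a : ℤ) - (θ (p.2 + 1) a : ℤ)))
            * q * s (p.2 + 1) / s p.1) (θ p.1 k))
      * (q ^ (θ p.1 k)
          / qPoch q
            (q ^ ((θ p.2 k : ℤ) - (θ p.1 k : ℤ)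
                - ∑ a ∈ Finset.Icc (k + 1) N, ((θ p.1 a : ℤ) - (θ p.2 a : ℤ)))
              * q * s p.1 / s p.2) (θ p.1 k))

/-- The asymptotically free `A_{N-1}` q-Toda function
`f^{A_{N-1} Toda}(x|s|q) = Σ_θ c^{Toda}_N(θ;s;q) ∏_{i<j} (x_j/x_i)^{θ_{i,j}}`,
regarded as a formal power series in the `M` variables `y₁, …, y_M` (where `y_m = x_{m+1}/x_m`,
so that `x_j/x_i = y_i ⋯ y_{j-1}`); here `M = N - 1`, or `M = N` for the natural embedding
`K[[y₁,…,y_{N-1}]] ⊆ K[[y₁,…,y_N]]`.  The coefficient of `y^d` is the (finite) sum of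
`c^{Toda}_N(θ;s;q)` over the strictly upper triangular `θ` with
`Σ_{i ≤ m < j} θ_{i,j} = d_m` for all `m`. -/
def fA (q : F) (s : ℕ → F) (N M : ℕ) : MvPowerSeries (Fin M) F :=
  fun d => ∑ᶠ θ : ℕ → ℕ → ℕ,
    if UT N θ ∧ ∀ m : Fin M,
        d m = ∑ p ∈ pairsLT 1 N,
          (if p.1 ≤ (m : ℕ) + 1 ∧ (m : ℕ) + 1 < p.2 then θ p.1 p.2 else 0)
    then cToda q s N θ else 0

/-- The monomial `∏ y_m ^ e(m)` (with coefficient 1). -/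
def mono {M : ℕ} (e : Fin M → ℕ) : MvPowerSeries (Fin M) F :=
  MvPowerSeries.monomial (Finsupp.equivFunOnFinite.symm e) 1

/-- The generator `y_ℓ` (1-based label `ℓ`, i.e. the variable of index `ℓ - 1`). -/
def Y {M : ℕ} (ℓ : ℕ) : MvPowerSeries (Fin M) F :=
  mono fun m => if (m : ℕ) + 1 = ℓ then 1 else 0

/-- The `ε`-th power of the shift operator `T_{q,x_i}`, i.e. the continuous algebra
automorphism determined by `y_{i-1} ↦ q^ε y_{i-1}` (when `i ≥ 2`) and `y_i ↦ q^{-ε} y_i`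
(when `y_i` is among the variables), fixing all other generators.  On the coefficient at a
monomial `y^d`, it multiplies by `q^{ε (d_{i-1} - d_i)}`. -/
def Tq (q : F) {M : ℕ} (i : ℕ) (ε : ℤ) (f : MvPowerSeries (Fin M) F) :
    MvPowerSeries (Fin M) F :=
  fun d => q ^ (ε * ∑ j : Fin M,
      (((if (j : ℕ) + 2 = i then 1 else 0) - (if (j : ℕ) + 1 = i then 1 else 0)) * (d j : ℤ)))
    * f d

/-- The `B_N` q-Toda operator
`D^{B_N} = Σ_{i=1}^{N-1} s_i (1 - x_{i+1}/x_i) T_{q,x_i} + s_N (1 - 1/x_N) T_{q,x_N}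
 + s₁⁻¹ T_{q,x₁}⁻¹ + Σ_{i=2}^N s_i⁻¹ (1 - x_i/x_{i-1}) T_{q,x_i}⁻¹`,
acting on `K[[y₁, …, y_N]]` with `y_i = x_{i+1}/x_i` (`i ≤ N-1`), `y_N = 1/x_N`. -/
def DB (q : F) (s : ℕ → F) (N : ℕ) (f : MvPowerSeries (Fin N) F) : MvPowerSeries (Fin N) F :=
  (∑ i ∈ Finset.Icc 1 (N - 1), s i • ((1 - Y i) * Tq q i 1 f))
    + s N • ((1 - Y N) * Tq q N 1 f)
    + (s 1)⁻¹ • Tq q 1 (-1) f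
    + ∑ i ∈ Finset.Icc 2 N, (s i)⁻¹ • ((1 - Y (i - 1)) * Tq q i (-1) f)

/-- The `A_{N-1}` q-Toda operator
`D^{A_{N-1}} = Σ_{i=1}^{N-1} s_i (1 - x_{i+1}/x_i) T_{q,x_i} + s_N T_{q,x_N}`,
acting on `K[[y₁, …, y_{N-1}]]`. -/
def DA (q : F) (s : ℕ → F) (N : ℕ) (f : MvPowerSeries (Fin (N - 1)) F) :
    MvPowerSeries (Fin (N - 1)) F :=
  (∑ i ∈ Finset.Icc 1 (N - 1), s i • ((1 - Y i) * Tq q i 1 f)) + s N • Tq q N 1 f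

/-- The branching coefficients `e^{B_N/A_{N-1}}_θ(s|q)`. -/
def eBA (q : F) (s : ℕ → F) (N : ℕ) (θ : ℕ → ℕ) : F :=
  (∏ k ∈ Finset.Icc 1 N,
      q ^ ((N - k + 1) * θ k) / (qPoch q q (θ k) * qPoch q (q / s k ^ 2) (θ k)))
  * ∏ p ∈ pairsLT 1 N,
      (1 / (qPoch q (q * s p.2 / s p.1) (θ p.1)
          * qPoch q (q ^ ((θ p.2 : ℤ) - (θ p.1 : ℤ)) * q * s p.1 / s p.2) (θ p.1)))
      * (qPoch q (q / (s p.1 * s p.2)) (θ p.1 + θ p.2)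
          / (qPoch q (q / (s p.1 * s p.2)) (θ p.1)
            * qPoch q (q / (s p.1 * s p.2)) (θ p.2)))

/-- The coefficients `d^{Toda}_N(θ; s; q)`. -/
def dToda (q : F) (s : ℕ → F) (N : ℕ) (θ : ℕ → ℕ) : F :=
  (∏ i ∈ Finset.Icc 1 (N - 1),
      (1 / qPoch q q (θ i)) * (q ^ θ i / qPoch q (q * s N / s i) (θ i)))
  * ∏ p ∈ pairsLT 1 (N - 1),
      (1 / qPoch q (q * s p.2 / s p.1) (θ p.1))
      * (q ^ θ p.1
          / qPoch q (q ^ ((θ p.2 : ℤ) - (θ p.1 : ℤ) + 1) * s p.1 / s p.2) (θ p.1))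

/-- The shifted parameters `(q^{-θ₁} s₁, …, q^{-θ_N} s_N)`. -/
def shiftAll (q : F) (s : ℕ → F) (θ : ℕ → ℕ) : ℕ → F := fun i => q ^ (-(θ i : ℤ)) * s i

/-- The shifted parameters `q^{-ε_k}·s = (s₁, …, q⁻¹ s_k, …, s_N)`. -/
def shiftOne (q : F) (s : ℕ → F) (k : ℕ) : ℕ → F := fun i => if i = k then q⁻¹ * s i else s i

/-- The right-hand side of the branching formula:
`Σ_{θ ∈ ℤ_{≥0}^N} e^{B_N/A_{N-1}}_θ(s|q) ∏_i x_i^{-θ_i}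
 · f^{A_{N-1} Toda}(x | q^{-θ₁}s₁, …, q^{-θ_N}s_N | q)`,
where `x_i⁻¹ = y_i y_{i+1} ⋯ y_N`, so that `∏_i x_i^{-θ_i}` is the monomial whose exponent at
`y_ℓ` is `θ₁ + ⋯ + θ_ℓ`. -/
def branchRHS (q : F) (s : ℕ → F) (N : ℕ) : MvPowerSeries (Fin N) F :=
  fun d => ∑ᶠ θ : ℕ → ℕ,
    if Vec N θ then
      eBA q s N θ * MvPowerSeries.coeff d
        (mono (fun m => ∑ i ∈ Finset.Icc 1 ((m : ℕ) + 1), θ i)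
          * fA q (shiftAll q s θ) N N)
    else 0

end QToda

/-!
Put `u_k = q^{-θ_k} s_k`. Each factor `(1 - a/x)(1 - 1/(a x))` equals
`x⁻¹ ((x + x⁻¹) - (a + a⁻¹))`, so after the Joukowski substitution `ζ = u + u⁻¹`, `σ = s + s⁻¹`
the sum on the right-hand side becomes the Lagrange sum
`Σ_k ∏_i (ζ_k - σ_i) / ∏_{i ≠ k} (ζ_k - ζ_i)`. Interpolating `∏_i (X - σ_i) - ∏_i (X - ζ_i)`,
of degree `< N`, at the nodes `ζ_k` identifies this sum with its coefficient of `X^{N-1}`,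
namely `Σ ζ_i - Σ σ_i`, the negative of the left-hand side. The nodes are distinct because
`u_i + u_i⁻¹ = u_j + u_j⁻¹` forces `u_i = u_j` or `u_i u_j = 1`, and neither happens for
generic `q, s`.
-/

open Finset

variable {F : Type*} [Field F] {ι : Type*} [DecidableEq ι]

open Polynomial in
theorem sum_prod_sub_div_prod_erase_sub (T : Finset ι) {z : ι → F} (hz : Set.InjOn z T)
    (σ : ι → F) :
    ∑ k ∈ T, (∏ i ∈ T, (z k - σ i)) / ∏ i ∈ T.erase k, (z k - z i)
      = ∑ i ∈ T, z i - ∑ i ∈ T, σ i := by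
  rcases T.eq_empty_or_nonempty with rfl | hT
  · simp
  have hdeg : (Lagrange.nodal T σ - Lagrange.nodal T z).degree < #T := by
    rw [← Lagrange.degree_nodal (v := σ)]
    exact degree_sub_lt_left (by rw [Lagrange.degree_nodal, Lagrange.degree_nodal])
      Lagrange.nodal_ne_zero
      (by rw [Lagrange.nodal_monic.leadingCoeff, Lagrange.nodal_monic.leadingCoeff])
  have hcoeff := Lagrange.coeff_eq_sum hz hdeg
  simp only [coeff_sub, Lagrange.nodal, prod_X_sub_C_coeff_card_pred _ _ hT.card_pos, eval_sub,
    eval_prod, eval_X, eval_C, neg_sub_neg] at hcoeff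
  rw [hcoeff]
  refine sum_congr rfl fun k hk => ?_
  rw [prod_eq_zero (f := fun i => z k - z i) hk (sub_self _), sub_zero]

theorem add_inv_eq_add_inv_iff {x y : F} (hx : x ≠ 0) (hy : y ≠ 0) :
    x + x⁻¹ = y + y⁻¹ ↔ x = y ∨ x * y = 1 := by
  have hfactor : x + x⁻¹ - (y + y⁻¹) = (x - y) * (x * y - 1) / (x * y) := by
    field_simp
    ring
  rw [← sub_eq_zero, hfactor, div_eq_zero_iff, mul_eq_zero, mul_eq_zero, sub_eq_zero,
    sub_eq_zero]
  simp [hx, hy]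

theorem one_sub_div_mul_one_sub_one_div {x a : F} (hx : x ≠ 0) (ha : a ≠ 0) :
    (1 - a / x) * (1 - 1 / (a * x)) = x⁻¹ * ((x + x⁻¹) - (a + a⁻¹)) := by
  field_simp
  ring

theorem sum_mul_prod_div_prod_erase_typeB (S : Finset ι) {u s : ι → F}
    (hu : ∀ i ∈ S, u i ≠ 0) (hs : ∀ i ∈ S, s i ≠ 0)
    (hinj : Set.InjOn (fun i => u i + (u i)⁻¹) S) :
    ∑ k ∈ S, u k * ((∏ i ∈ S, (1 - s i / u k) * (1 - 1 / (s i * u k)))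
        / ∏ i ∈ S.erase k, (1 - u i / u k) * (1 - 1 / (u i * u k)))
      = ∑ i ∈ S, (u i + (u i)⁻¹) - ∑ i ∈ S, (s i + (s i)⁻¹) := by
  rw [← sum_prod_sub_div_prod_erase_sub S hinj]
  refine sum_congr rfl fun k hk => ?_
  have hx := hu k hk
  rw [prod_congr rfl fun i hi => one_sub_div_mul_one_sub_one_div hx (hs i hi),
    prod_congr rfl fun i hi => one_sub_div_mul_one_sub_one_div hx (hu i (mem_of_mem_erase hi)),
    prod_mul_distrib, prod_mul_distrib, prod_const, prod_const, card_erase_of_mem hk]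
  obtain ⟨n, hn⟩ := Nat.exists_eq_add_one_of_ne_zero (card_ne_zero_of_mem hk)
  rw [hn, Nat.add_sub_cancel, pow_succ]
  have : (u k)⁻¹ ^ n ≠ 0 := pow_ne_zero _ (inv_ne_zero hx)
  field_simp

namespace MvPolynomial

variable {σ R : Type*} [CommSemiring R] [Nontrivial R]

theorem X_pow_mul_X_ne_X_pow_mul_X {o i j : σ} (hio : i ≠ o) (hij : i ≠ j) (a b : ℕ) :
    (X o ^ a * X i : MvPolynomial σ R) ≠ X o ^ b * X j := by
  classical
  intro h
  simpa [hio.symm, hij.symm] using congrArg (eval fun m => if m = i then 0 else 1) h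

theorem X_mul_X_ne_X_pow {o i j : σ} (hio : i ≠ o) (hjo : j ≠ o) (a : ℕ) :
    (X i * X j : MvPolynomial σ R) ≠ X o ^ a := by
  classical
  intro h
  simpa [hio, hjo] using congrArg (eval fun m => if m = o then 1 else 0) h

end MvPolynomial

namespace QToda

theorem rational_identity_typeB_of_injOn (q : F) (s : ℕ → F) (θ : ℕ → ℕ) (S : Finset ℕ)
    (hq : q ≠ 0) (hs : ∀ i ∈ S, s i ≠ 0)
    (hinj : Set.InjOn (fun i => shiftAll q s θ i + (shiftAll q s θ i)⁻¹) S) :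
    ∑ i ∈ S, ((1 - q ^ (-(θ i : ℤ))) * s i + (1 - q ^ (θ i : ℤ)) * (s i)⁻¹)
    = - ∑ k ∈ S, q ^ (-(θ k : ℤ)) * s k *
          ((∏ i ∈ S, (1 - q ^ (θ k) * s i / s k) * (1 - q ^ (θ k) / (s i * s k)))
            / ∏ i ∈ S.erase k,
                (1 - q ^ ((θ k : ℤ) - (θ i : ℤ)) * s i / s k)
                  * (1 - q ^ ((θ k : ℤ) + (θ i : ℤ)) / (s i * s k))) := by
  have hu : ∀ i ∈ S, shiftAll q s θ i ≠ 0 := fun i hi =>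
    mul_ne_zero (zpow_ne_zero _ hq) (hs i hi)
  trans ∑ i ∈ S, (s i + (s i)⁻¹)
    - ∑ i ∈ S, (shiftAll q s θ i + (shiftAll q s θ i)⁻¹)
  · rw [← sum_sub_distrib]
    refine sum_congr rfl fun i _ => ?_
    simp only [shiftAll, zpow_neg, zpow_natCast]
    field_simp
    ring
  rw [← neg_sub, ← sum_mul_prod_div_prod_erase_typeB S hu hs hinj]
  congr 1
  refine sum_congr rfl fun k _ => ?_
  simp only [shiftAll, zpow_sub₀ hq, zpow_add₀ hq, zpow_neg, zpow_natCast]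
  congr 2 <;> refine prod_congr rfl fun i _ => ?_ <;> field_simp

section Indeterminates

variable (N : ℕ)

theorem algebraMap_injective :
    Function.Injective (algebraMap (MvPolynomial (Fin (N + 1)) ℚ) (K N)) :=
  IsFractionRing.injective _ _

theorem sP_of_le {i : ℕ} (h : i ≤ N) :
    sP N i = algebraMap (MvPolynomial (Fin (N + 1)) ℚ) (K N)
      (MvPolynomial.X ⟨i, Nat.lt_succ_of_le h⟩) :=
  dif_pos h

theorem qP_ne_zero : qP N ≠ 0 :=
  (map_ne_zero_iff _ (algebraMap_injective N)).2 (MvPolynomial.X_ne_zero _)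

theorem sP_ne_zero (i : ℕ) : sP N i ≠ 0 := by
  unfold sP
  split_ifs
  · exact (map_ne_zero_iff _ (algebraMap_injective N)).2 (MvPolynomial.X_ne_zero _)
  · exact one_ne_zero

variable {N}

theorem qP_pow_mul_sP_ne {i j : ℕ} (hi : 1 ≤ i) (hiN : i ≤ N) (hjN : j ≤ N) (hij : i ≠ j)
    (a b : ℕ) : qP N ^ a * sP N i ≠ qP N ^ b * sP N j := by
  rw [qP, sP_of_le N hiN, sP_of_le N hjN, ← map_pow, ← map_mul, ← map_pow, ← map_mul,
    (algebraMap_injective N).ne_iff]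
  exact MvPolynomial.X_pow_mul_X_ne_X_pow_mul_X (by simp [Fin.ext_iff]; omega)
    (by simpa [Fin.ext_iff] using hij) a b

theorem sP_mul_sP_ne_qP_pow {i j : ℕ} (hi : 1 ≤ i) (hiN : i ≤ N) (hj : 1 ≤ j)
    (hjN : j ≤ N) (a : ℕ) : sP N i * sP N j ≠ qP N ^ a := by
  rw [qP, sP_of_le N hiN, sP_of_le N hjN, ← map_pow, ← map_mul,
    (algebraMap_injective N).ne_iff]
  exact MvPolynomial.X_mul_X_ne_X_pow (by simp [Fin.ext_iff]; omega)
    (by simp [Fin.ext_iff]; omega) a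

theorem injOn_shiftAll_add_inv (θ : ℕ → ℕ) :
    Set.InjOn (fun i => shiftAll (qP N) (sP N) θ i + (shiftAll (qP N) (sP N) θ i)⁻¹)
      (Icc 1 N) := by
  have hq := qP_ne_zero N
  have hs := sP_ne_zero N
  intro i hi j hj h
  rw [coe_Icc, Set.mem_Icc] at hi hj
  rcases (add_inv_eq_add_inv_iff (mul_ne_zero (zpow_ne_zero _ hq) (hs i))
    (mul_ne_zero (zpow_ne_zero _ hq) (hs j))).1 h with h | h
  · by_contra hij
    apply qP_pow_mul_sP_ne hi.1 hi.2 hj.2 hij (θ j) (θ i)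
    simp only [zpow_neg, zpow_natCast] at h
    field_simp at h
    linear_combination h
  · refine absurd ?_ (sP_mul_sP_ne_qP_pow hi.1 hi.2 hj.1 hj.2 (θ i + θ j))
    simp only [zpow_neg, zpow_natCast] at h
    field_simp at h
    rw [pow_add]
    linear_combination h

end Indeterminates

/-- eq. (3.10).  In `ℚ(q, s₁, …, s_N)`, for `θ ∈ ℤ_{≥0}^N`:
`Σ_{i=1}^N ((1-q^{-θ_i}) s_i + (1-q^{θ_i}) s_i⁻¹)
 = - Σ_{k=1}^N q^{-θ_k} s_k ∏_{i=1}^N (1 - q^{θ_k} s_i/s_k)(1 - q^{θ_k}/(s_i s_k))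
     / ∏_{i≠k} (1 - q^{θ_k-θ_i} s_i/s_k)(1 - q^{θ_k+θ_i}/(s_i s_k))`. -/
theorem rational_identity_typeB (N : ℕ) (θ : ℕ → ℕ) :
    ∑ i ∈ Finset.Icc 1 N,
        ((1 - (qP N) ^ (-(θ i : ℤ))) * sP N i + (1 - (qP N) ^ (θ i : ℤ)) * (sP N i)⁻¹)
    = - ∑ k ∈ Finset.Icc 1 N,
        (qP N) ^ (-(θ k : ℤ)) * sP N k *
          ((∏ i ∈ Finset.Icc 1 N,
              (1 - (qP N) ^ (θ k) * sP N i / sP N k)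
                * (1 - (qP N) ^ (θ k) / (sP N i * sP N k)))
            / ∏ i ∈ (Finset.Icc 1 N).erase k,
                (1 - (qP N) ^ ((θ k : ℤ) - (θ i : ℤ)) * sP N i / sP N k)
                  * (1 - (qP N) ^ ((θ k : ℤ) + (θ i : ℤ)) / (sP N i * sP N k))) :=
  rational_identity_typeB_of_injOn (qP N) (sP N) θ _ (qP_ne_zero N) (fun i _ => sP_ne_zero N i)
    (injOn_shiftAll_add_inv θ)

end QToda
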